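/- arXiv:1201.3441 — 3 statements merged into one kernel-verified Lean document; each statement's English description precedes it below -/
import Mathlib

section
/- Let R be a finite ring. Then the zero-divisor graph Γ(R) is isomorphic to the complete graph K₂ on two vertices if and only if R is isomorphic to one of the following four rings: N_{0,3}, ℤ₉, ℤ₃[x]/(x²), ℤ₂ × ℤ₂. -/
/-!
If `Γ(R) ≅ K₂`, the nonzero zero-divisors of `R` are two elements `a ≠ b` with `ab = 0` or
`ba = 0`, and `-a ∈ {a, b}`.

If `b = -a =: -x`, then `x² = 0` and `3x = 0`, and `Z = {0, x, -x}` is both the left and the right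
annihilator of `x`. Either `R = Z`, the null ring on `ℤ₃`, or `s ↦ xs` maps `R` onto `Z` with
kernel `Z`. In the latter case pick `r` with `xr = x = rx`; then `e = r - (r² - r)` is an
idempotent which is not a zero-divisor, hence an identity, and `R` is spanned by `1` and `x`:
it is `ℤ₉` if `3 ≠ 0` and `𝔽₃[ε] ≅ ℤ₃[x]/(x²)` if `3 = 0`.

If `-a = a`, then `a + b` is not a zero-divisor, which forces `a` and `b` to be orthogonal
idempotents; `a + b` is then an identity and `R ≅ 𝔽₂ × 𝔽₂`.
-/

/-- An element of a ring is a (one-sided or two-sided) zero-divisor: it is nonzero and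
kills some nonzero element on the left or on the right. -/
def IsZD {R : Type*} [NonUnitalNonAssocRing R] (x : R) : Prop :=
  x ≠ 0 ∧ ∃ y : R, y ≠ 0 ∧ (x * y = 0 ∨ y * x = 0)

/-- The zero-divisor graph `Γ(R)` of a ring `R`: vertices are the nonzero zero-divisors,
and distinct vertices `x`, `y` are adjacent iff `x*y = 0` or `y*x = 0`. -/
def zdvGraph (R : Type*) [NonUnitalNonAssocRing R] :
    SimpleGraph {x : R // IsZD x} where
  Adj a b := a ≠ b ∧ ((a : R) * (b : R) = 0 ∨ (b : R) * (a : R) = 0)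
  symm := by
    constructor
    rintro a b ⟨hne, h⟩
    exact ⟨hne.symm, h.symm⟩
  loopless := by
    constructor
    rintro a ⟨hne, -⟩
    exact hne rfl

/-- A variety of (associative, not necessarily unital or commutative) rings: a class of
rings closed under isomorphisms, subrings, homomorphic images and arbitrary products. -/
structure RingVariety : Type 1 where
  mem : ∀ (R : Type) [NonUnitalRing R], Prop
  closed_iso : ∀ (R S : Type) [NonUnitalRing R] [NonUnitalRing S],
    (R ≃+* S) → mem R → mem S
  closed_subring : ∀ (R : Type) [NonUnitalRing R] (S : NonUnitalSubring R),
    mem R → mem S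
  closed_image : ∀ (R S : Type) [NonUnitalRing R] [NonUnitalRing S] (f : R →ₙ+* S),
    Function.Surjective f → mem R → mem S
  closed_prod : ∀ (ι : Type) (R : ι → Type) [∀ i, NonUnitalRing (R i)],
    (∀ i, mem (R i)) → mem (∀ i, R i)

/-- A variety is graph-determined if any two finite rings in it with isomorphic
zero-divisor graphs are isomorphic. -/
def GraphDetermined (M : RingVariety) : Prop :=
  ∀ (R S : Type) [NonUnitalRing R] [NonUnitalRing S], Finite R → Finite S →
    M.mem R → M.mem S →
    Nonempty (zdvGraph R ≃g zdvGraph S) → Nonempty (R ≃+* S)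

/-- The null ring on an abelian group `A`: all products are zero. -/
def NullRing (A : Type*) := A

instance {A : Type*} [AddCommGroup A] : NonUnitalRing (NullRing A) :=
  { (inferInstance : AddCommGroup A) with
    mul := fun _ _ => (0 : A)
    left_distrib := fun _ _ _ => (add_zero (0 : A)).symm
    right_distrib := fun _ _ _ => (add_zero (0 : A)).symm
    zero_mul := fun _ => rfl
    mul_zero := fun _ => rfl
    mul_assoc := fun _ _ _ => rfl }

open Polynomial

theorem SimpleGraph.nonempty_iso_completeGraph_fin_two_iff {V : Type*} {G : SimpleGraph V} :
    Nonempty (G ≃g completeGraph (Fin 2)) ↔ ∃ u v, G.Adj u v ∧ ∀ w, w = u ∨ w = v := by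
  constructor
  · rintro ⟨f⟩
    refine ⟨f.symm 0, f.symm 1, f.symm.map_rel_iff.2 (by simp), fun w => ?_⟩
    rcases Fin.exists_fin_two.1 ⟨f w, rfl⟩ with h | h <;> simp [← h]
  · rintro ⟨u, v, huv, hcover⟩
    classical
    have hvu : v ≠ u := huv.ne.symm
    refine ⟨⟨⟨fun w => if w = u then 0 else 1, ![u, v], fun w => ?_, fun i => ?_⟩, ?_⟩⟩
    · rcases hcover w with rfl | rfl <;> simp [hvu]
    · fin_cases i <;> simp [hvu]
    · intro w w'
      rcases hcover w with rfl | rfl <;> rcases hcover w' with rfl | rfl <;>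
        simp [hvu, huv, huv.symm]

section ZeroDivisors

variable {R S : Type*}

theorem IsZD.neg [NonUnitalNonAssocRing R] {x : R} (hx : IsZD x) : IsZD (-x) := by
  obtain ⟨hx0, y, hy0, hxy⟩ := hx
  exact ⟨neg_ne_zero.2 hx0, y, hy0, by simpa using hxy⟩

theorem eq_zero_or_isZD_of_mul_eq_zero [NonUnitalNonAssocRing R] {x t : R}
    (hx : x ≠ 0) (h : x * t = 0 ∨ t * x = 0) : t = 0 ∨ IsZD t :=
  or_iff_not_imp_left.2 fun ht => ⟨ht, x, hx, h.symm⟩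

theorem isRegular_of_not_isZD [NonUnitalNonAssocRing R] {e : R} (h0 : e ≠ 0)
    (h : ¬IsZD e) : IsRegular e :=
  ⟨isLeftRegular_of_non_zero_divisor e fun t ht =>
      by_contra fun ht0 => h ⟨h0, t, ht0, .inl ht⟩,
    isRightRegular_of_non_zero_divisor e fun t ht =>
      by_contra fun ht0 => h ⟨h0, t, ht0, .inr ht⟩⟩

theorem RingEquiv.isZD_apply_iff [NonUnitalNonAssocRing R] [NonUnitalNonAssocRing S]
    (e : R ≃+* S) {x : R} : IsZD (e x) ↔ IsZD x := by
  constructor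
  · rintro ⟨hx0, y, hy0, hxy⟩
    refine ⟨by simpa using hx0, e.symm y, by simpa using hy0, ?_⟩
    simpa [← e.injective.eq_iff] using hxy
  · rintro ⟨hx0, y, hy0, hxy⟩
    refine ⟨by simpa using hx0, e y, by simpa using hy0, ?_⟩
    simpa [← map_mul, ← e.symm.injective.eq_iff] using hxy

def RingEquiv.zdvGraphIso [NonUnitalNonAssocRing R] [NonUnitalNonAssocRing S] (e : R ≃+* S) :
    zdvGraph R ≃g zdvGraph S where
  toFun x := ⟨e x, e.isZD_apply_iff.2 x.2⟩
  invFun y := ⟨e.symm y, e.isZD_apply_iff.1 (by simpa using y.2)⟩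
  left_inv x := by simp
  right_inv y := by simp
  map_rel_iff' := by
    intro x y
    simp [zdvGraph, ← map_mul, Subtype.ext_iff]

theorem nonempty_zdvGraph_iso_completeGraph_fin_two_iff [NonUnitalNonAssocRing R] :
    Nonempty (zdvGraph R ≃g SimpleGraph.completeGraph (Fin 2)) ↔
      ∃ a b : R, a ≠ b ∧ (a * b = 0 ∨ b * a = 0) ∧ ∀ z, IsZD z ↔ z = a ∨ z = b := by
  rw [SimpleGraph.nonempty_iso_completeGraph_fin_two_iff]
  constructor
  · rintro ⟨⟨a, ha⟩, ⟨b, hb⟩, ⟨hab, hadj⟩, hcover⟩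
    refine ⟨a, b, fun h => hab (Subtype.ext h), hadj, fun z => ⟨fun hz => ?_, ?_⟩⟩
    · simpa [Subtype.ext_iff] using hcover ⟨z, hz⟩
    · rintro (rfl | rfl) <;> assumption
  · rintro ⟨a, b, hab, hadj, hZD⟩
    refine ⟨⟨a, (hZD a).2 (.inl rfl)⟩, ⟨b, (hZD b).2 (.inr rfl)⟩,
      ⟨fun h => hab (congrArg Subtype.val h), hadj⟩, fun z => ?_⟩
    simpa [Subtype.ext_iff] using (hZD z).1 z.2

end ZeroDivisors

theorem IsLeftRegular.mul_eq_self_of_isIdempotentElem {R : Type*} [Semigroup R] {e : R}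
    (h : IsLeftRegular e) (he : IsIdempotentElem e) (s : R) : e * s = s :=
  h (by simp only [← mul_assoc, he.eq])

theorem IsRightRegular.mul_eq_self_of_isIdempotentElem {R : Type*} [Semigroup R] {e : R}
    (h : IsRightRegular e) (he : IsIdempotentElem e) (s : R) : s * e = s :=
  h (by simp only [mul_assoc, he.eq])

abbrev NonUnitalRing.toRingOfIdentity {R : Type*} [NonUnitalRing R] (e : R)
    (he : ∀ s, e * s = s ∧ s * e = s) : Ring R :=
  { ‹NonUnitalRing R› with
    one := e
    one_mul := fun s => (he s).1
    mul_one := fun s => (he s).2 }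

theorem nonempty_ringEquiv_nullRing_zmod {R : Type*} [NonUnitalRing R] {n : ℕ}
    (hmul : ∀ a b : R, a * b = 0) {g : R} (hg : ∀ s, s ∈ AddSubgroup.zmultiples g)
    (hn : addOrderOf g = n) : Nonempty (R ≃+* NullRing (ZMod n)) := by
  let e : R ≃+ ZMod n := (zmodAddEquivOfGenerator hg
    ((addOrderOf_eq_card_of_forall_mem_zmultiples hg).symm.trans hn)).symm
  exact ⟨{ e with map_mul' := fun a b => by rw [hmul]; exact e.map_zero }⟩

section Recognition

variable {A : Type*} [Ring A]

theorem nonempty_ringEquiv_zmod_of_forall_eq_intCast {n : ℕ} (hn : addOrderOf (1 : A) = n)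
    (hs : ∀ s : A, ∃ k : ℤ, s = k) : Nonempty (A ≃+* ZMod n) := by
  have : CharP A n := hn ▸ CharP.addOrderOf_one A
  refine ⟨(RingEquiv.ofBijective (ZMod.castHom (dvd_refl n) A)
    ⟨ZMod.castHom_injective A, fun s => ?_⟩).symm⟩
  obtain ⟨k, rfl⟩ := hs s
  exact ⟨k, map_intCast _ k⟩

variable {p : ℕ} [Fact p.Prime] [CharP A p]

theorem nonempty_ringEquiv_dualNumber_zmod {x : A} (hx0 : x ≠ 0) (hxx : x * x = 0)
    (hs : ∀ s : A, ∃ a b : ℤ, s = a + b * x) : Nonempty (A ≃+* DualNumber (ZMod p)) := by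
  let _ := ZMod.algebra A p
  let f : DualNumber (ZMod p) →ₐ[ZMod p] A :=
    DualNumber.lift ⟨(Algebra.ofId _ _, x), hxx, fun a => (Algebra.commutes a x).symm⟩
  have hf : ∀ q, f q = q.fst • 1 + q.snd • x := fun q => by
    simp [f, DualNumber.lift_apply_apply, Algebra.smul_def]
  refine ⟨(RingEquiv.ofBijective f
    ⟨(injective_iff_map_eq_zero f).2 fun q hq => ?_, fun s => ?_⟩).symm⟩
  · rw [hf] at hq
    have hfst : q.fst = 0 := by
      have := congrArg (· * x) hq
      simp only [add_mul, smul_mul_assoc, one_mul, hxx, smul_zero, add_zero, zero_mul] at this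
      exact (smul_eq_zero.1 this).resolve_right hx0
    rw [hfst, zero_smul, zero_add] at hq
    exact TrivSqZeroExt.ext hfst ((smul_eq_zero.1 hq).resolve_right hx0)
  · obtain ⟨a, b, rfl⟩ := hs s
    exact ⟨.inl a + .inr b, by simp [hf, Algebra.smul_def]⟩

theorem nonempty_ringEquiv_zmod_prod {x : A} (hx : IsIdempotentElem x) (hx0 : x ≠ 0)
    (hx1 : x ≠ 1) (hs : ∀ s : A, ∃ a b : ℤ, s = a * x + b * (1 - x)) :
    Nonempty (A ≃+* ZMod p × ZMod p) := by
  let _ := ZMod.algebra A p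
  have hy : IsIdempotentElem (1 - x) := hx.one_sub
  have hxy : x * (1 - x) = 0 := by rw [mul_sub, mul_one, hx.eq, sub_self]
  have hyx : (1 - x) * x = 0 := by rw [sub_mul, one_mul, hx.eq, sub_self]
  let f : ZMod p × ZMod p →+* A :=
    { toFun := fun q => q.1 • x + q.2 • (1 - x)
      map_one' := by simp
      map_mul' := fun q r => by
        simp only [Prod.fst_mul, Prod.snd_mul, add_mul, mul_add, smul_mul_smul_comm, hx.eq, hy.eq,
          hxy, hyx, smul_zero, add_zero, zero_add]
      map_zero' := by simp
      map_add' := fun q r => by simp only [Prod.fst_add, Prod.snd_add, add_smul]; abel }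
  refine ⟨(RingEquiv.ofBijective f
    ⟨(injective_iff_map_eq_zero f).2 fun q hq => ?_, fun s => ?_⟩).symm⟩
  · have h1 := congrArg (x * ·) hq
    have h2 := congrArg ((1 - x) * ·) hq
    simp only [f, RingHom.coe_mk, MonoidHom.coe_mk, OneHom.coe_mk, mul_add, mul_smul_comm, hx.eq,
      hy.eq, hxy, hyx, smul_zero, add_zero, zero_add, mul_zero] at h1 h2
    exact Prod.ext ((smul_eq_zero.1 h1).resolve_right hx0)
      ((smul_eq_zero.1 h2).resolve_right (sub_ne_zero.2 hx1.symm))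
  · obtain ⟨a, b, rfl⟩ := hs s
    exact ⟨(a, b), by simp [f, Algebra.smul_def]⟩

end Recognition

section CharTwo

variable {R : Type*} [NonUnitalRing R] {x y : R}

theorem orthogonal_idempotents_of_isZD_iff (hZD : ∀ z, IsZD z ↔ z = x ∨ z = y)
    (hx0 : x ≠ 0) (hy0 : y ≠ 0) (hxy : x * y = 0) (hreg : IsRegular (x + y)) :
    x * x = x ∧ y * y = y ∧ y * x = 0 := by
  have hZ : ∀ {u : R} (t : R), u ≠ 0 → (u * t = 0 ∨ t * u = 0) →
      t = 0 ∨ t = x ∨ t = y :=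
    fun _ hu h => (eq_zero_or_isZD_of_mul_eq_zero hu h).imp_right (hZD _).1
  have hxx : x * x = x := by
    rcases hZ (x * x) hy0 (.inr (by rw [mul_assoc, hxy, mul_zero])) with h | h | h
    · exact absurd (hreg.2.mul_right_eq_zero_iff.1 (by rw [mul_add, h, hxy, add_zero])) hx0
    · exact h
    · have hyy : y * y = 0 := calc
        y * y = x * x * y := by rw [h]
        _ = 0 := by rw [mul_assoc, hxy, mul_zero]
      exact absurd (hreg.1.mul_left_eq_zero_iff.1 (by rw [add_mul, hxy, hyy, add_zero])) hy0
  have hyy : y * y = y := by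
    rcases hZ (y * y) hx0 (.inl (by rw [← mul_assoc, hxy, zero_mul])) with h | h | h
    · exact absurd (hreg.1.mul_left_eq_zero_iff.1 (by rw [add_mul, hxy, h, add_zero])) hy0
    · refine absurd ?_ hx0
      calc x = y * y * (y * y) := by rw [h, hxx]
        _ = y * y * y * y := by simp only [mul_assoc]
        _ = 0 := by rw [h, hxy, zero_mul]
    · exact h
  refine ⟨hxx, hyy, by_contra fun hyx => ?_⟩
  have hsq : y * x * (y * x) = 0 := by rw [mul_assoc, ← mul_assoc x, hxy, zero_mul, mul_zero]
  rcases (hZD _).1 ⟨hyx, y * x, hyx, .inl hsq⟩ with h | h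
  · exact hx0 (by rw [← hxx, ← h, hsq])
  · exact hy0 (by rw [← hyy, ← h, hsq])

theorem nonempty_ringEquiv_zmod_two_prod_of_isZD_iff (hZD : ∀ z, IsZD z ↔ z = x ∨ z = y)
    (hne : x ≠ y) (hnx : -x = x) (hny : -y = y) (hxy : x * y = 0) :
    Nonempty (R ≃+* ZMod 2 × ZMod 2) := by
  have hx0 : x ≠ 0 := ((hZD x).2 (.inl rfl)).1
  have hy0 : y ≠ 0 := ((hZD y).2 (.inr rfl)).1
  have hreg : IsRegular (x + y) := by
    refine isRegular_of_not_isZD (fun h => hne ?_) fun h => ?_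
    · rw [eq_neg_of_add_eq_zero_right h, hnx]
    · rcases (hZD _).1 h with h | h
      exacts [hy0 (add_eq_left.1 h), hx0 (add_eq_right.1 h)]
  obtain ⟨hxx, hyy, hyx⟩ := orthogonal_idempotents_of_isZD_iff hZD hx0 hy0 hxy hreg
  have he : IsIdempotentElem (x + y) := by
    simp only [IsIdempotentElem, add_mul, mul_add, hxx, hyy, hxy, hyx, add_zero, zero_add]
  let _ := NonUnitalRing.toRingOfIdentity (x + y) fun s =>
    ⟨hreg.1.mul_eq_self_of_isIdempotentElem he s, hreg.2.mul_eq_self_of_isIdempotentElem he s⟩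
  have hsub : 1 - x = y := add_sub_cancel_left x y
  have : Nontrivial R := ⟨x, 0, hx0⟩
  have : CharP R 2 := (CharP.charP_iff_prime_eq_zero Nat.prime_two).2 <| by
    rw [Nat.cast_two, ← one_add_one_eq_two, show (1 : R) = x + y from rfl, add_add_add_comm,
      neg_eq_iff_add_eq_zero.1 hnx, neg_eq_iff_add_eq_zero.1 hny, add_zero]
  have hZ : ∀ {u : R} (t : R), u ≠ 0 → u * t = 0 → t = 0 ∨ t = x ∨ t = y :=
    fun _ hu h => (eq_zero_or_isZD_of_mul_eq_zero hu (.inl h)).imp_right (hZD _).1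
  refine nonempty_ringEquiv_zmod_prod (p := 2) hxx hx0 (fun h => hy0 ?_) fun s => ?_
  · rw [← hsub, ← h, sub_self]
  obtain ⟨a, ha⟩ : ∃ a : ℤ, x * s = a * x := by
    rcases hZ (x * s) hy0 (by rw [← mul_assoc, hyx, zero_mul]) with h | h | h
    · exact ⟨0, by simp [h]⟩
    · exact ⟨1, by simp [h]⟩
    · exact absurd (by rw [← hxy, ← h, ← mul_assoc, hxx]) hy0
  obtain ⟨b, hb⟩ : ∃ b : ℤ, y * s = b * y := by
    rcases hZ (y * s) hx0 (by rw [← mul_assoc, hxy, zero_mul]) with h | h | h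
    · exact ⟨0, by simp [h]⟩
    · exact absurd (by rw [← hyx, ← h, ← mul_assoc, hyy]) hx0
    · exact ⟨1, by simp [h]⟩
  refine ⟨a, b, ?_⟩
  rw [hsub, ← ha, ← hb, ← add_mul]
  exact (one_mul s).symm

end CharTwo

theorem three_nsmul_eq_zero_of_isZD_iff {R : Type*} [NonUnitalRing R] {x : R}
    (hZD : ∀ z, IsZD z ↔ z = x ∨ z = -x) (hx : x ≠ -x) (hxx : x * x = 0) : 3 • x = 0 := by
  have hx0 : x ≠ 0 := fun h => hx (by rw [h, neg_zero])
  have h2 : x + x ≠ 0 := fun h => hx (eq_neg_of_add_eq_zero_left h)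
  rcases (hZD _).1 ⟨h2, x, hx0, .inl (by rw [add_mul, hxx, add_zero])⟩ with h | h
  · exact absurd (add_eq_left.1 h) hx0
  · rw [succ_nsmul, two_nsmul, h, neg_add_cancel]

theorem nonempty_ringEquiv_zmod_nine_or_dualNumber_of_isZD_iff {A : Type*} [Ring A] {x : A}
    (hZD : ∀ z, IsZD z ↔ z = x ∨ z = -x) (hx : x ≠ -x) (hxx : x * x = 0) :
    Nonempty (A ≃+* ZMod 9) ∨ Nonempty (A ≃+* DualNumber (ZMod 3)) := by
  have hx0 : x ≠ 0 := fun h => hx (by rw [h, neg_zero])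
  have hZ : ∀ t, x * t = 0 → ∃ j : ℤ, t = j * x := fun t ht => by
    rcases (eq_zero_or_isZD_of_mul_eq_zero hx0 (.inl ht)).imp_right (hZD t).1 with h | h | h
    exacts [⟨0, by simp [h]⟩, ⟨1, by simp [h]⟩, ⟨-1, by simp [h]⟩]
  have hs : ∀ s : A, ∃ k j : ℤ, s = k + j * x := fun s => by
    obtain ⟨k, hk⟩ := hZ (x * s) (by rw [← mul_assoc, hxx, zero_mul])
    obtain ⟨j, hj⟩ := hZ (s - k) (by rw [mul_sub, hk, Int.cast_comm, sub_self])
    exact ⟨k, j, by rw [← hj, add_sub_cancel]⟩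
  have h3 : (3 : A) * x = 0 := by
    rw [← three_nsmul_eq_zero_of_isZD_iff hZD hx hxx, nsmul_eq_mul, Nat.cast_ofNat]
  have : Nontrivial A := ⟨x, 0, hx0⟩
  have hx3 : x * 3 = 0 := by rw [← Nat.cast_ofNat, ← Nat.cast_comm, Nat.cast_ofNat, h3]
  by_cases h30 : (3 : A) = 0
  · have : CharP A 3 := (CharP.charP_iff_prime_eq_zero Nat.prime_three).2 (by exact_mod_cast h30)
    exact .inr (nonempty_ringEquiv_dualNumber_zmod hx0 hxx hs)
  obtain ⟨c, hc, hcx⟩ : ∃ c : ℤ, c * c = 9 ∧ x = c := by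
    rcases (eq_zero_or_isZD_of_mul_eq_zero hx0 (.inl hx3)).imp_right (hZD _).1 with h | h | h
    exacts [absurd h h30, ⟨3, rfl, by rw [← h]; norm_num⟩,
      ⟨-3, rfl, by rw [← neg_neg x, ← h]; norm_num⟩]
  have h9 : (9 : A) = 0 := by rw [← hxx, hcx, ← Int.cast_mul, hc]; norm_num
  refine .inl (nonempty_ringEquiv_zmod_of_forall_eq_intCast
    (addOrderOf_eq_prime_pow (p := 3) (n := 1) ?_ ?_) fun s => ?_)
  · simpa using h30
  · rw [nsmul_one]; exact_mod_cast h9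
  · obtain ⟨k, j, rfl⟩ := hs s
    exact ⟨k + j * c, by rw [hcx, Int.cast_add, Int.cast_mul]⟩

theorem nonempty_ringEquiv_of_isZD_iff_neg {R : Type*} [NonUnitalRing R] {x : R}
    (hZD : ∀ z, IsZD z ↔ z = x ∨ z = -x) (hx : x ≠ -x) (hxx : x * x = 0) :
    Nonempty (R ≃+* NullRing (ZMod 3)) ∨ Nonempty (R ≃+* ZMod 9) ∨
      Nonempty (R ≃+* DualNumber (ZMod 3)) := by
  have hx0 : x ≠ 0 := fun h => hx (by rw [h, neg_zero])
  have hZ : ∀ t, (x * t = 0 ∨ t * x = 0) → t = 0 ∨ t = x ∨ t = -x := fun t ht =>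
    (eq_zero_or_isZD_of_mul_eq_zero hx0 ht).imp_right (hZD t).1
  have hZx : ∀ t, (t = 0 ∨ t = x ∨ t = -x) → x * t = 0 ∧ t * x = 0 := by
    rintro t (rfl | rfl | rfl) <;> simp [hxx]
  by_cases hnull : ∀ s, x * s = 0
  · have hmem : ∀ s, s = 0 ∨ s = x ∨ s = -x := fun s => hZ s (.inl (hnull s))
    refine .inl (nonempty_ringEquiv_nullRing_zmod (fun a b => ?_) (fun s => ?_)
      (addOrderOf_eq_prime (three_nsmul_eq_zero_of_isZD_iff hZD hx hxx) hx0))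
    · rcases hmem a with rfl | rfl | rfl <;> simp [hnull]
    · rcases hmem s with h | h | h <;> rw [h]
      exacts [zero_mem _, AddSubgroup.mem_zmultiples x, neg_mem (AddSubgroup.mem_zmultiples x)]
  obtain ⟨r, hr⟩ : ∃ r, x * r = x := by
    obtain ⟨s, hs⟩ := not_forall.1 hnull
    rcases hZ (x * s) (.inl (by rw [← mul_assoc, hxx, zero_mul])) with h | h | h
    exacts [absurd h hs, ⟨s, h⟩, ⟨-s, by rw [mul_neg, h, neg_neg]⟩]
  obtain ⟨z, hz_def⟩ : ∃ z, z = r * r - r := ⟨_, rfl⟩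
  have hz : z = 0 ∨ z = x ∨ z = -x :=
    hZ z (.inl (by rw [hz_def, mul_sub, ← mul_assoc, hr, hr, sub_self]))
  have hrx : r * x = x := by
    have hrrx : r * (r * x) = r * x := by
      rw [← mul_assoc, ← sub_eq_zero, ← sub_mul, ← hz_def, (hZx z hz).2]
    rcases hZ (r * x) (.inr (by rw [mul_assoc, hxx, mul_zero])) with h | h | h
    · exact absurd ((hZx r (hZ r (.inr h))).1.symm.trans hr) hx0.symm
    · exact h
    · refine absurd ?_ hx
      calc x = r * (r * x) := by rw [h, mul_neg, h, neg_neg]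
        _ = -x := by rw [hrrx, h]
  have hrz : r * z = z ∧ z * r = z ∧ z * z = 0 := by
    rcases hz with h | h | h <;> simp [h, hr, hrx, hxx]
  have he : IsIdempotentElem (r - z) := by
    rw [IsIdempotentElem, sub_mul, mul_sub, mul_sub, hrz.1, hrz.2.1, hrz.2.2,
      eq_add_of_sub_eq hz_def.symm]
    abel
  have hxe : x * (r - z) = x := by rw [mul_sub, hr, (hZx z hz).1, sub_zero]
  have hreg : IsRegular (r - z) := by
    refine isRegular_of_not_isZD (fun h => hx0 (by rw [← hxe, h, mul_zero])) fun h => hx0 ?_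
    rw [← hxe, (hZx _ (.inr ((hZD _).1 h))).1]
  let _ := NonUnitalRing.toRingOfIdentity (r - z) fun s =>
    ⟨hreg.1.mul_eq_self_of_isIdempotentElem he s, hreg.2.mul_eq_self_of_isIdempotentElem he s⟩
  exact .inr (nonempty_ringEquiv_zmod_nine_or_dualNumber_of_isZD_iff hZD hx hxx)

theorem nonempty_ringEquiv_of_isZD_iff {R : Type*} [NonUnitalRing R] {a b : R} (hab : a ≠ b)
    (hadj : a * b = 0 ∨ b * a = 0) (hZD : ∀ z, IsZD z ↔ z = a ∨ z = b) :
    Nonempty (R ≃+* NullRing (ZMod 3)) ∨ Nonempty (R ≃+* ZMod 9) ∨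
      Nonempty (R ≃+* DualNumber (ZMod 3)) ∨ Nonempty (R ≃+* ZMod 2 × ZMod 2) := by
  rcases (hZD _).1 ((hZD a).2 (.inl rfl)).neg with hna | rfl
  · have hnb : -b = b := ((hZD _).1 ((hZD b).2 (.inr rfl)).neg).resolve_left
      fun h => hab (by rw [← hna, ← h, neg_neg])
    refine .inr (.inr (.inr ?_))
    rcases hadj with h | h
    · exact nonempty_ringEquiv_zmod_two_prod_of_isZD_iff hZD hab hna hnb h
    · exact nonempty_ringEquiv_zmod_two_prod_of_isZD_iff (fun z => (hZD z).trans or_comm)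
        hab.symm hnb hna h
  · have hxx : a * a = 0 := by rcases hadj with h | h <;> simpa using h
    rcases nonempty_ringEquiv_of_isZD_iff_neg hZD hab hxx with h | h | h
    exacts [.inl h, .inr (.inl h), .inr (.inr (.inl h))]

noncomputable def adjoinRootXSqAlgEquivDualNumber (K : Type*) [CommRing K] :
    AdjoinRoot (X ^ 2 : K[X]) ≃ₐ[K] DualNumber K :=
  AlgEquiv.ofAlgHom
    (AdjoinRoot.liftAlgHom _ (Algebra.ofId K _) DualNumber.eps (by simp [DualNumber.eps_pow_two]))
    (DualNumber.lift ⟨(Algebra.ofId K _, AdjoinRoot.root _),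
      by rw [← pow_two, ← AdjoinRoot.mk_X, ← map_pow, AdjoinRoot.mk_self],
      fun _ => Commute.all _ _⟩)
    (DualNumber.algHom_ext (by simp))
    (AdjoinRoot.algHom_ext (by simp))

instance : Fintype (DualNumber (ZMod 3)) := inferInstanceAs (Fintype (ZMod 3 × ZMod 3))
instance : DecidableEq (DualNumber (ZMod 3)) := inferInstanceAs (DecidableEq (ZMod 3 × ZMod 3))
instance : Fintype (NullRing (ZMod 3)) := inferInstanceAs (Fintype (ZMod 3))
instance : DecidableEq (NullRing (ZMod 3)) := inferInstanceAs (DecidableEq (ZMod 3))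

theorem zdvGraph_eq_K2_iff_general (R : Type) [NonUnitalRing R] :
    Nonempty (zdvGraph R ≃g SimpleGraph.completeGraph (Fin 2)) ↔
      (Nonempty (R ≃+* NullRing (ZMod 3)) ∨
        Nonempty (R ≃+* ZMod 9) ∨
        Nonempty (R ≃+*
          (Polynomial (ZMod 3) ⧸ Ideal.span {(Polynomial.X : Polynomial (ZMod 3)) ^ 2})) ∨
        Nonempty (R ≃+* (ZMod 2 × ZMod 2))) := by
  have hdual := (adjoinRootXSqAlgEquivDualNumber (ZMod 3)).toRingEquiv
  constructor
  · intro h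
    obtain ⟨a, b, hab, hadj, hZD⟩ := nonempty_zdvGraph_iso_completeGraph_fin_two_iff.1 h
    rcases nonempty_ringEquiv_of_isZD_iff hab hadj hZD with h | h | h | h
    exacts [.inl h, .inr (.inl h), .inr (.inr (.inl (h.map (·.trans hdual.symm)))),
      .inr (.inr (.inr h))]
  · rintro (h | h | h | h) <;> obtain ⟨e⟩ := h <;> refine .map e.zdvGraphIso.trans ?_
    · exact nonempty_zdvGraph_iso_completeGraph_fin_two_iff.2 (by unfold IsZD; decide)
    · exact nonempty_zdvGraph_iso_completeGraph_fin_two_iff.2 (by unfold IsZD; decide)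
    · exact .map hdual.zdvGraphIso.trans
        (nonempty_zdvGraph_iso_completeGraph_fin_two_iff.2 (by unfold IsZD; decide))
    · exact nonempty_zdvGraph_iso_completeGraph_fin_two_iff.2 (by unfold IsZD; decide)

/-- A finite ring has zero-divisor graph `K₂` iff it is isomorphic to one of
`N_{0,3}`, `ℤ₉`, `ℤ₃[x]/(x²)`, `ℤ₂ × ℤ₂`. -/
theorem zdvGraph_eq_K2_iff (R : Type) [NonUnitalRing R] (hfin : Finite R) :
    Nonempty (zdvGraph R ≃g SimpleGraph.completeGraph (Fin 2)) ↔
      (Nonempty (R ≃+* NullRing (ZMod 3)) ∨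
        Nonempty (R ≃+* ZMod 9) ∨
        Nonempty (R ≃+*
          (Polynomial (ZMod 3) ⧸ Ideal.span {(Polynomial.X : Polynomial (ZMod 3)) ^ 2})) ∨
        Nonempty (R ≃+* (ZMod 2 × ZMod 2))) :=
  zdvGraph_eq_K2_iff_general R
end

section
/- For every prime p, the zero-divisor graphs Γ(N_{p²}), Γ(N_{p,p}), Γ(A_p), Γ(A_p⁰), and Γ(N_{0,p} ⊕ ℤ_p) are pairwise isomorphic. -/
/-- The ring `N_{p²}`: the additive group `ℤ/p²ℤ` equipped with the multiplication
`x ∘ y = p·x·y`. -/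
def Npsq (p : ℕ) := ZMod (p ^ 2)

namespace Npsq

/-- The identity map from `N_{p²}` to its underlying additive group `ℤ/p²ℤ`. -/
def zc {p : ℕ} (x : Npsq p) : ZMod (p ^ 2) := x

instance (p : ℕ) : NonUnitalRing (Npsq p) :=
  { (inferInstance : AddCommGroup (ZMod (p ^ 2))) with
    mul := fun a b => ((p : ZMod (p ^ 2)) * zc a * zc b : ZMod (p ^ 2))
    left_distrib := fun a b c => by
      show (p : ZMod (p ^ 2)) * zc a * (zc b + zc c)
          = (p : ZMod (p ^ 2)) * zc a * zc b + (p : ZMod (p ^ 2)) * zc a * zc c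
      ring
    right_distrib := fun a b c => by
      show (p : ZMod (p ^ 2)) * (zc a + zc b) * zc c
          = (p : ZMod (p ^ 2)) * zc a * zc c + (p : ZMod (p ^ 2)) * zc b * zc c
      ring
    zero_mul := fun a => by
      show (p : ZMod (p ^ 2)) * (0 : ZMod (p ^ 2)) * zc a = (0 : ZMod (p ^ 2))
      ring
    mul_zero := fun a => by
      show (p : ZMod (p ^ 2)) * zc a * (0 : ZMod (p ^ 2)) = (0 : ZMod (p ^ 2))
      ring
    mul_assoc := fun a b c => by
      show (p : ZMod (p ^ 2)) * ((p : ZMod (p ^ 2)) * zc a * zc b) * zc c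
          = (p : ZMod (p ^ 2)) * zc a * ((p : ZMod (p ^ 2)) * zc b * zc c)
      ring }

end Npsq

/-- `A_p`: the ring of 2×2 matrices over `GF(p)` of the form `[[a,b],[0,0]]`
(i.e. with zero second row). -/
def Ap (p : ℕ) : NonUnitalSubring (Matrix (Fin 2) (Fin 2) (ZMod p)) where
  carrier := {M | M 1 0 = 0 ∧ M 1 1 = 0}
  zero_mem' := ⟨rfl, rfl⟩
  add_mem' := by
    rintro M N ⟨h1, h2⟩ ⟨h3, h4⟩
    exact ⟨by simp [Matrix.add_apply, h1, h3], by simp [Matrix.add_apply, h2, h4]⟩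
  neg_mem' := by
    rintro M ⟨h1, h2⟩
    exact ⟨by simp [Matrix.neg_apply, h1], by simp [Matrix.neg_apply, h2]⟩
  mul_mem' := by
    rintro M N ⟨h1, h2⟩ ⟨h3, h4⟩
    constructor <;> simp [Matrix.mul_apply, Fin.sum_univ_two, h1, h2]

/-- `A_p⁰`: the ring of 2×2 matrices over `GF(p)` of the form `[[a,0],[b,0]]`
(i.e. with zero second column). -/
def Ap0 (p : ℕ) : NonUnitalSubring (Matrix (Fin 2) (Fin 2) (ZMod p)) where
  carrier := {M | M 0 1 = 0 ∧ M 1 1 = 0}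
  zero_mem' := ⟨rfl, rfl⟩
  add_mem' := by
    rintro M N ⟨h1, h2⟩ ⟨h3, h4⟩
    exact ⟨by simp [Matrix.add_apply, h1, h3], by simp [Matrix.add_apply, h2, h4]⟩
  neg_mem' := by
    rintro M ⟨h1, h2⟩
    exact ⟨by simp [Matrix.neg_apply, h1], by simp [Matrix.neg_apply, h2]⟩
  mul_mem' := by
    rintro M N ⟨h1, h2⟩ ⟨h3, h4⟩
    constructor <;> simp [Matrix.mul_apply, Fin.sum_univ_two, h1, h3, h4]

/-- `N_{p,p}`: the ring of 3×3 matrices over `GF(p)` of the form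
`[[0,a,b],[0,0,a],[0,0,0]]` with `a, b ∈ GF(p)`. -/
def Npp (p : ℕ) : NonUnitalSubring (Matrix (Fin 3) (Fin 3) (ZMod p)) where
  carrier := {M | M 0 0 = 0 ∧ M 1 0 = 0 ∧ M 1 1 = 0 ∧ M 2 0 = 0 ∧ M 2 1 = 0 ∧
    M 2 2 = 0 ∧ M 1 2 = M 0 1}
  zero_mem' := ⟨rfl, rfl, rfl, rfl, rfl, rfl, rfl⟩
  add_mem' := by
    rintro M N ⟨h1, h2, h3, h4, h5, h6, h7⟩ ⟨g1, g2, g3, g4, g5, g6, g7⟩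
    refine ⟨?_, ?_, ?_, ?_, ?_, ?_, ?_⟩ <;>
      simp [Matrix.add_apply, h1, h2, h3, h4, h5, h6, h7, g1, g2, g3, g4, g5, g6, g7]
  neg_mem' := by
    rintro M ⟨h1, h2, h3, h4, h5, h6, h7⟩
    refine ⟨?_, ?_, ?_, ?_, ?_, ?_, ?_⟩ <;>
      simp [Matrix.neg_apply, h1, h2, h3, h4, h5, h6, h7]
  mul_mem' := by
    rintro M N ⟨h1, h2, h3, h4, h5, h6, h7⟩ ⟨g1, g2, g3, g4, g5, g6, g7⟩
    refine ⟨?_, ?_, ?_, ?_, ?_, ?_, ?_⟩ <;>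
      simp [Matrix.mul_apply, Fin.sum_univ_three, h1, h2, h3, h4, h5, h6, h7,
        g1, g2, g3, g4, g5, g6, g7]

/-
In each of the five rings there are coordinates `(a, b) ∈ 𝔽_p × 𝔽_p`, with `0 ↦ 0`, in which
`xy = 0 ∨ yx = 0` holds exactly when one of the two factors has `a = 0`. For `N_{p²}` these are
the base-`p` digits `x = a + p b`: since `p² = 0`, the product `p x y` only sees `p a c`. In the
matrix rings `a` is the entry that survives multiplication, and in `N_{0,p} ⊕ ℤ_p` it is the
`ℤ_p`-component. A bijection preserving `0` and this relation is an isomorphism of zero-divisor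
graphs, so all five graphs are isomorphic to one another.
-/

section ZeroProducts

variable {R S K : Type*} [NonUnitalNonAssocRing R] [NonUnitalNonAssocRing S]

lemma isZD_congr (e : R ≃ S) (he : e 0 = 0)
    (hmul : ∀ x y : R, (x * y = 0 ∨ y * x = 0) ↔ (e x * e y = 0 ∨ e y * e x = 0)) (x : R) :
    IsZD x ↔ IsZD (e x) := by
  have h0 : ∀ x, e x = 0 ↔ x = 0 := fun x => by rw [← he, e.apply_eq_iff_eq]
  refine and_congr (not_congr (h0 x).symm) (e.exists_congr fun y => ?_)
  rw [hmul, Ne, Ne, h0]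

def zdvGraphIsoOfEquiv (e : R ≃ S) (he : e 0 = 0)
    (hmul : ∀ x y : R, (x * y = 0 ∨ y * x = 0) ↔ (e x * e y = 0 ∨ e y * e x = 0)) :
    zdvGraph R ≃g zdvGraph S where
  toEquiv := e.subtypeEquiv (isZD_congr e he hmul)
  map_rel_iff' {a b} := by
    change (_ ∧ _) ↔ (_ ∧ _)
    rw [Ne, Ne, Subtype.ext_iff, Subtype.ext_iff]
    exact and_congr (not_congr e.apply_eq_iff_eq) (hmul a b).symm

variable [Zero K]

def HasZeroProductPattern (R : Type*) [NonUnitalNonAssocRing R] (Q : K → K → Prop) : Prop :=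
  ∃ f : K ≃ R, f 0 = 0 ∧ ∀ u v, (f u * f v = 0 ∨ f v * f u = 0) ↔ Q u v

lemma HasZeroProductPattern.of_mul_eq {Q : K → K → Prop} (f : K ≃ R) (h0 : f 0 = 0)
    (μ : K → K → K) (hμ : ∀ u v, f u * f v = f (μ u v))
    (hQ : ∀ u v, (μ u v = 0 ∨ μ v u = 0) ↔ Q u v) : HasZeroProductPattern R Q := by
  refine ⟨f, h0, fun u v => ?_⟩
  rw [hμ, hμ, ← h0, f.apply_eq_iff_eq, f.apply_eq_iff_eq, hQ]

theorem HasZeroProductPattern.nonempty_zdvGraph_iso {Q : K → K → Prop}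
    (hR : HasZeroProductPattern R Q) (hS : HasZeroProductPattern S Q) :
    Nonempty (zdvGraph R ≃g zdvGraph S) := by
  obtain ⟨f, hf0, hf⟩ := hR
  obtain ⟨g, hg0, hg⟩ := hS
  refine ⟨zdvGraphIsoOfEquiv (f.symm.trans g) ?_ fun x y => ?_⟩
  · rw [Equiv.trans_apply, ← hf0, f.symm_apply_apply, hg0]
  · simpa only [Equiv.trans_apply, f.apply_symm_apply] using
      (hf (f.symm x) (f.symm y)).trans (hg _ _).symm

end ZeroProducts

def EitherFstEqZero {K : Type*} [Zero K] (u v : K × K) : Prop := u.1 = 0 ∨ v.1 = 0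

variable {p : ℕ}

lemma NullRing.prod_hasZeroProductPattern [Fact p.Prime] :
    HasZeroProductPattern (NullRing (ZMod p) × ZMod p) (EitherFstEqZero (K := ZMod p)) := by
  refine .of_mul_eq (Equiv.prodComm (ZMod p) (NullRing (ZMod p))) rfl (fun u v => (u.1 * v.1, 0))
    (fun _ _ => rfl) fun u v => ?_
  simp only [Prod.ext_iff, Prod.fst_zero, Prod.snd_zero, mul_eq_zero, EitherFstEqZero]
  tauto

namespace Ap

def ofPair : ZMod p × ZMod p ≃ Ap p where
  toFun u := ⟨!![u.1, u.2; 0, 0], rfl, rfl⟩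
  invFun x := (x.1 0 0, x.1 0 1)
  left_inv _ := rfl
  right_inv x := by
    obtain ⟨h10, h11⟩ := x.2
    ext i j
    fin_cases i <;> fin_cases j <;> simp [h10, h11]

@[simp]
lemma coe_ofPair (u : ZMod p × ZMod p) :
    (ofPair u : Matrix (Fin 2) (Fin 2) (ZMod p)) = !![u.1, u.2; 0, 0] := rfl

lemma ofPair_mul_ofPair (u v : ZMod p × ZMod p) :
    ofPair u * ofPair v = ofPair (u.1 * v.1, u.1 * v.2) := by
  ext : 1
  rw [MulMemClass.coe_mul, coe_ofPair, coe_ofPair, coe_ofPair, Matrix.mul_fin_two]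
  simp

lemma ofPair_zero : ofPair (0 : ZMod p × ZMod p) = 0 := by
  ext i j
  fin_cases i <;> fin_cases j <;> rfl

lemma hasZeroProductPattern [Fact p.Prime] :
    HasZeroProductPattern (Ap p) (EitherFstEqZero (K := ZMod p)) := by
  refine .of_mul_eq ofPair ofPair_zero _ ofPair_mul_ofPair fun u v => ?_
  simp only [Prod.ext_iff, Prod.fst_zero, Prod.snd_zero, mul_eq_zero, EitherFstEqZero]
  tauto

end Ap

namespace Ap0

def ofPair : ZMod p × ZMod p ≃ Ap0 p where
  toFun u := ⟨!![u.1, 0; u.2, 0], rfl, rfl⟩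
  invFun x := (x.1 0 0, x.1 1 0)
  left_inv _ := rfl
  right_inv x := by
    obtain ⟨h01, h11⟩ := x.2
    ext i j
    fin_cases i <;> fin_cases j <;> simp [h01, h11]

@[simp]
lemma coe_ofPair (u : ZMod p × ZMod p) :
    (ofPair u : Matrix (Fin 2) (Fin 2) (ZMod p)) = !![u.1, 0; u.2, 0] := rfl

lemma ofPair_mul_ofPair (u v : ZMod p × ZMod p) :
    ofPair u * ofPair v = ofPair (u.1 * v.1, u.2 * v.1) := by
  ext : 1
  rw [MulMemClass.coe_mul, coe_ofPair, coe_ofPair, coe_ofPair, Matrix.mul_fin_two]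
  simp

lemma ofPair_zero : ofPair (0 : ZMod p × ZMod p) = 0 := by
  ext i j
  fin_cases i <;> fin_cases j <;> rfl

lemma hasZeroProductPattern [Fact p.Prime] :
    HasZeroProductPattern (Ap0 p) (EitherFstEqZero (K := ZMod p)) := by
  refine .of_mul_eq ofPair ofPair_zero _ ofPair_mul_ofPair fun u v => ?_
  simp only [Prod.ext_iff, Prod.fst_zero, Prod.snd_zero, mul_eq_zero, EitherFstEqZero]
  tauto

end Ap0

namespace Npp

def ofPair : ZMod p × ZMod p ≃ Npp p where
  toFun u := ⟨!![0, u.1, u.2; 0, 0, u.1; 0, 0, 0], rfl, rfl, rfl, rfl, rfl, rfl, rfl⟩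
  invFun x := (x.1 0 1, x.1 0 2)
  left_inv _ := rfl
  right_inv x := by
    obtain ⟨h00, h10, h11, h20, h21, h22, h12⟩ := x.2
    ext i j
    fin_cases i <;> fin_cases j <;> simp [h00, h10, h11, h20, h21, h22, h12]

@[simp]
lemma coe_ofPair (u : ZMod p × ZMod p) :
    (ofPair u : Matrix (Fin 3) (Fin 3) (ZMod p)) = !![0, u.1, u.2; 0, 0, u.1; 0, 0, 0] := rfl

lemma ofPair_mul_ofPair (u v : ZMod p × ZMod p) :
    ofPair u * ofPair v = ofPair (0, u.1 * v.1) := by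
  ext : 1
  rw [MulMemClass.coe_mul, coe_ofPair, coe_ofPair, coe_ofPair, Matrix.mul_fin_three]
  simp

lemma ofPair_zero : ofPair (0 : ZMod p × ZMod p) = 0 := by
  ext i j
  fin_cases i <;> fin_cases j <;> rfl

lemma hasZeroProductPattern [Fact p.Prime] :
    HasZeroProductPattern (Npp p) (EitherFstEqZero (K := ZMod p)) := by
  refine .of_mul_eq ofPair ofPair_zero _ ofPair_mul_ofPair fun u v => ?_
  simp only [Prod.ext_iff, Prod.fst_zero, Prod.snd_zero, mul_eq_zero, EitherFstEqZero]
  tauto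

end Npp

namespace Npsq

def ofDigits (u : ZMod p × ZMod p) : Npsq p := ((u.1.val + p * u.2.val : ℕ) : ZMod (p ^ 2))

lemma ofDigits_injective [NeZero p] : Function.Injective (ofDigits (p := p)) := by
  rintro ⟨a, b⟩ ⟨c, d⟩ h
  have hac : a = c := by
    have := congrArg (ZMod.castHom (dvd_pow_self p two_ne_zero) (ZMod p)) h
    simpa only [ofDigits, Nat.cast_add, Nat.cast_mul, map_add, map_mul, map_natCast,
      ZMod.natCast_self, zero_mul, add_zero, ZMod.natCast_zmod_val] using this
  subst hac
  have hbd : p * b.val ≡ p * d.val [MOD p * p] := by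
    rw [← sq]
    exact Nat.ModEq.add_left_cancel' _ ((ZMod.natCast_eq_natCast_iff _ _ _).mp h)
  have hbd' := (Nat.ModEq.mul_left_cancel' (NeZero.ne p) hbd).eq_of_lt_of_lt
    (ZMod.val_lt b) (ZMod.val_lt d)
  rw [ZMod.val_injective p hbd']

lemma ofDigits_zero : ofDigits (0 : ZMod p × ZMod p) = 0 := by
  simp only [ofDigits, Prod.fst_zero, Prod.snd_zero, ZMod.val_zero, mul_zero, add_zero,
    Nat.cast_zero]
  rfl

lemma ofDigits_mul_ofDigits (u v : ZMod p × ZMod p) :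
    ofDigits u * ofDigits v = ofDigits (0, u.1 * v.1) := by
  have hp2 : (p : ZMod (p ^ 2)) ^ 2 = 0 := by exact_mod_cast ZMod.natCast_self (p ^ 2)
  have hval : ((p * (u.1 * v.1).val : ℕ) : ZMod (p ^ 2)) =
      ((p * (u.1.val * v.1.val) : ℕ) : ZMod (p ^ 2)) := by
    rw [ZMod.natCast_eq_natCast_iff, sq, ZMod.val_mul]
    exact Nat.ModEq.mul_left' p (Nat.mod_modEq _ _)
  change (p : ZMod (p ^ 2)) * ((u.1.val + p * u.2.val : ℕ) : ZMod (p ^ 2)) *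
      ((v.1.val + p * v.2.val : ℕ) : ZMod (p ^ 2)) =
    (((0 : ZMod p).val + p * (u.1 * v.1).val : ℕ) : ZMod (p ^ 2))
  rw [ZMod.val_zero, zero_add, hval]
  push_cast
  linear_combination
    ((u.1.val : ZMod (p ^ 2)) * v.2.val + u.2.val * v.1.val + p * u.2.val * v.2.val) * hp2

instance [NeZero p] : Finite (Npsq p) := inferInstanceAs (Finite (ZMod (p ^ 2)))

noncomputable def digitsEquiv [NeZero p] : ZMod p × ZMod p ≃ Npsq p :=
  Equiv.ofBijective ofDigits <| ofDigits_injective.bijective_of_nat_card_le <| by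
    change Nat.card (ZMod (p ^ 2)) ≤ _
    rw [Nat.card_prod, Nat.card_zmod, Nat.card_zmod, sq]

lemma hasZeroProductPattern [Fact p.Prime] :
    HasZeroProductPattern (Npsq p) (EitherFstEqZero (K := ZMod p)) := by
  refine .of_mul_eq digitsEquiv ofDigits_zero _ ofDigits_mul_ofDigits fun u v => ?_
  simp only [Prod.ext_iff, Prod.fst_zero, Prod.snd_zero, mul_eq_zero, EitherFstEqZero]
  tauto

end Npsq

/-- For every prime `p`, the zero-divisor graphs of `N_{p²}`, `N_{p,p}`, `A_p`, `A_p⁰`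
and `N_{0,p} ⊕ ℤ_p` are pairwise isomorphic. -/
theorem zdvGraphs_pairwise_iso (p : ℕ) (hp : p.Prime) :
    Nonempty (zdvGraph (Npsq p) ≃g zdvGraph (NullRing (ZMod p) × ZMod p)) ∧
    Nonempty (zdvGraph (Npp p) ≃g zdvGraph (NullRing (ZMod p) × ZMod p)) ∧
    Nonempty (zdvGraph (Ap p) ≃g zdvGraph (NullRing (ZMod p) × ZMod p)) ∧
    Nonempty (zdvGraph (Ap0 p) ≃g zdvGraph (NullRing (ZMod p) × ZMod p)) ∧
    Nonempty (zdvGraph (Npsq p) ≃g zdvGraph (Npp p)) ∧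
    Nonempty (zdvGraph (Npsq p) ≃g zdvGraph (Ap p)) ∧
    Nonempty (zdvGraph (Npsq p) ≃g zdvGraph (Ap0 p)) ∧
    Nonempty (zdvGraph (Npp p) ≃g zdvGraph (Ap p)) ∧
    Nonempty (zdvGraph (Npp p) ≃g zdvGraph (Ap0 p)) ∧
    Nonempty (zdvGraph (Ap p) ≃g zdvGraph (Ap0 p)) := by
  have : Fact p.Prime := ⟨hp⟩
  have hNpsq := Npsq.hasZeroProductPattern (p := p)
  have hNpp := Npp.hasZeroProductPattern (p := p)
  have hAp := Ap.hasZeroProductPattern (p := p)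
  have hAp0 := Ap0.hasZeroProductPattern (p := p)
  have hNull := NullRing.prod_hasZeroProductPattern (p := p)
  exact ⟨hNpsq.nonempty_zdvGraph_iso hNull, hNpp.nonempty_zdvGraph_iso hNull,
    hAp.nonempty_zdvGraph_iso hNull, hAp0.nonempty_zdvGraph_iso hNull,
    hNpsq.nonempty_zdvGraph_iso hNpp, hNpsq.nonempty_zdvGraph_iso hAp,
    hNpsq.nonempty_zdvGraph_iso hAp0, hNpp.nonempty_zdvGraph_iso hAp,
    hNpp.nonempty_zdvGraph_iso hAp0, hAp.nonempty_zdvGraph_iso hAp0⟩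
end

section
/- Let 𝔐 be a graph-determined variety of rings. Then for every finite ring R ∈ 𝔐 there exist pairwise distinct primes q₁, …, q_t such that q₁²q₂²⋯q_t²·x = 0 for all x ∈ R; equivalently, there is a squarefree positive integer n with n²·x = 0 for all x ∈ R. -/
open Function

theorem RingVariety.mem_of_injective (M : RingVariety) {A B : Type} [NonUnitalRing A] [NonUnitalRing B] (f : A →ₙ+* B)
    (hf : Injective f) (hB : M.mem B) : M.mem A :=
  M.closed_iso _ _ (RingEquiv.ofBijective f.rangeRestrict
      ⟨fun _ _ h => hf (congrArg Subtype.val h), f.rangeRestrict_surjective⟩).symm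
    (M.closed_subring _ _ hB)

def NullRing.map {A B : Type*} [AddCommGroup A] [AddCommGroup B] (f : A →+ B) :
    NullRing A →ₙ+* NullRing B where
  toFun := f
  map_mul' _ _ := f.map_zero
  map_zero' := f.map_zero
  map_add' := f.map_add

def QuotientAddGroup.mkNullRing {S : Type*} [NonUnitalRing S] (H : AddSubgroup S)
    (hH : ∀ x y : S, x * y ∈ H) : S →ₙ+* NullRing (S ⧸ H) where
  toFun := QuotientAddGroup.mk
  map_mul' x y := (QuotientAddGroup.eq_zero_iff _).mpr (hH x y)
  map_zero' := rfl
  map_add' _ _ := rfl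

noncomputable def zmodAddHom {G : Type*} [AddCommGroup G] (x : G) : ZMod (addOrderOf x) →+ G :=
  ZMod.lift _ ⟨zmultiplesHom G x, by simp⟩

theorem zmodAddHom_intCast {G : Type*} [AddCommGroup G] (x : G) (i : ℤ) :
    zmodAddHom x i = i • x := by
  simp [zmodAddHom, ZMod.lift_coe]

theorem zmodAddHom_injective {G : Type*} [AddCommGroup G] (x : G) :
    Injective (zmodAddHom x) := by
  refine (injective_iff_map_eq_zero _).mpr fun k hk => ?_
  obtain ⟨i, rfl⟩ := ZMod.intCast_surjective k
  rw [zmodAddHom_intCast, ← addOrderOf_dvd_iff_zsmul_eq_zero] at hk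
  exact (ZMod.intCast_zmod_eq_zero_iff_dvd _ _).mpr hk

noncomputable def zmodRingHomOfIdempotent {R : Type*} [NonUnitalRing R] {e : R}
    (he : IsIdempotentElem e) : ZMod (addOrderOf e) →ₙ+* R where
  __ := zmodAddHom e
  map_mul' := ZMod.intCast_surjective.forall₂.mpr fun i j => by
    simp only [AddMonoidHom.toFun_eq_coe, ← Int.cast_mul, zmodAddHom_intCast,
      smul_mul_smul_comm, he.eq]

theorem mul_eq_zsmul_mul_self_of_cube_eq_zero {R : Type*} [NonUnitalRing R] {b : R}
    (hb : b * (b * b) = 0) (m n m' n' : ℤ) :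
    (m • b + n • (b * b)) * (m' • b + n' • (b * b)) = (m * m') • (b * b) := by
  have hb' : b * b * b = 0 := by rw [mul_assoc, hb]
  have hb'' : b * b * (b * b) = 0 := by rw [← mul_assoc, hb', zero_mul]
  simp only [add_mul, mul_add, smul_mul_smul_comm, hb, hb', hb'', smul_zero, add_zero]

def subringSpanSelfSq {R : Type*} [NonUnitalRing R] (b : R) (hb : b * (b * b) = 0) :
    NonUnitalSubring R where
  carrier := {y | ∃ m n : ℤ, m • b + n • (b * b) = y}
  zero_mem' := ⟨0, 0, by simp⟩
  add_mem' := by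
    rintro _ _ ⟨m, n, rfl⟩ ⟨m', n', rfl⟩
    exact ⟨m + m', n + n', by simp only [add_smul]; abel⟩
  neg_mem' := by
    rintro _ ⟨m, n, rfl⟩
    exact ⟨-m, -n, by simp only [neg_smul]; abel⟩
  mul_mem' := by
    rintro _ _ ⟨m, n, rfl⟩ ⟨m', n', rfl⟩
    exact ⟨0, m * m', by rw [mul_eq_zsmul_mul_self_of_cube_eq_zero hb, zero_smul, zero_add]⟩

theorem AddMonoid.not_pow_succ_dvd_exponent {G : Type*} [AddMonoid G] {p k : ℕ} (hp : 1 < p)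
    (hG : exponent G ≠ 0) (h : ∀ x : G, p ^ (k + 1) • x = 0 → p ^ k • x = 0) :
    ¬ p ^ (k + 1) ∣ exponent G := by
  rintro ⟨m, hm⟩
  have hm0 : m ≠ 0 := by rintro rfl; exact hG (hm.trans (mul_zero _))
  have hdvd : exponent G ∣ p ^ k * m := exponent_dvd_of_forall_nsmul_eq_zero fun x => by
    rw [mul_nsmul', h _ (by rw [← mul_nsmul', ← hm, exponent_nsmul_eq_zero])]
  rw [hm] at hdvd
  have := (Nat.pow_dvd_pow_iff_le_right hp).mp (Nat.dvd_of_mul_dvd_mul_right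
    (Nat.pos_of_ne_zero hm0) hdvd)
  omega

open UniqueFactorizationMonoid in
theorem Nat.dvd_radical_sq_of_cubeFree {m : ℕ} (hm : m ≠ 0) (h : ∀ p, p.Prime → ¬ p ^ 3 ∣ m) :
    m ∣ radical m ^ 2 := by
  refine (Nat.factorization_prime_le_iff_dvd hm (pow_ne_zero _ (Nat.radical_pos m).ne')).mp
    fun p hp => ?_
  rw [Nat.factorization_pow, Finsupp.smul_apply, smul_eq_mul]
  by_cases hpm : p ∣ m
  · have hrad : 1 ≤ (radical m).factorization p := by
      rw [← hp.pow_dvd_iff_le_factorization (Nat.radical_pos m).ne', pow_one]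
      exact Nat.dvd_of_mem_primeFactors (by
        rw [Nat.primeFactors_radical]; exact Nat.mem_primeFactors.mpr ⟨hp, hpm, hm⟩)
    have hle : m.factorization p ≤ 2 := by
      by_contra hgt
      exact h p hp ((hp.pow_dvd_iff_le_factorization hm).mpr (by omega))
    omega
  · simp [Nat.factorization_eq_zero_of_not_dvd hpm]

theorem isEmpty_zdv_of_noZeroDivisors (D : Type*) [NonUnitalRing D] [NoZeroDivisors D] :
    IsEmpty {x : D // IsZD x} :=
  ⟨fun ⟨_, hx0, _, hy0, hxy⟩ => hxy.elim (mul_ne_zero hx0 hy0) (mul_ne_zero hy0 hx0)⟩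

theorem isZD_iff_ne_zero_of_mul_eq_zero {A : Type*} [NonUnitalRing A] (hA : ∀ u v : A, u * v = 0)
    (x : A) : IsZD x ↔ x ≠ 0 :=
  ⟨And.left, fun hx => ⟨hx, x, hx, Or.inl (hA x x)⟩⟩

theorem zdvGraph_eq_top_of_mul_eq_zero {A : Type*} [NonUnitalRing A] (hA : ∀ u v : A, u * v = 0) :
    zdvGraph A = ⊤ := by
  ext a b
  simp [zdvGraph, hA]

theorem card_isZD_add_one_of_mul_eq_zero {A : Type*} [NonUnitalRing A] [Finite A]
    (hA : ∀ u v : A, u * v = 0) : Nat.card {x : A // IsZD x} + 1 = Nat.card A := by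
  classical
  rw [← Nat.card_congr (Equiv.optionSubtypeNe (0 : A)), Finite.card_option,
    Nat.card_congr (Equiv.subtypeEquivRight (isZD_iff_ne_zero_of_mul_eq_zero hA))]

theorem nonempty_zdvGraph_iso_of_mul_eq_zero {A B : Type*} [NonUnitalRing A] [NonUnitalRing B]
    [Finite A] [Finite B] (hA : ∀ u v : A, u * v = 0) (hB : ∀ u v : B, u * v = 0)
    (hcard : Nat.card A = Nat.card B) : Nonempty (zdvGraph A ≃g zdvGraph B) := by
  obtain ⟨f⟩ : Nonempty ({x : A // IsZD x} ≃ {x : B // IsZD x}) := Finite.card_eq.mp <| by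
    have := card_isZD_add_one_of_mul_eq_zero hA
    have := card_isZD_add_one_of_mul_eq_zero hB
    omega
  rw [zdvGraph_eq_top_of_mul_eq_zero hA, zdvGraph_eq_top_of_mul_eq_zero hB]
  exact ⟨SimpleGraph.Iso.completeGraph f⟩

namespace GraphDetermined

variable {M : RingVariety}

theorem subsingleton_of_noZeroDivisors (hgd : GraphDetermined M) {D : Type} [NonUnitalRing D]
    [NoZeroDivisors D] [Finite D] (hD : M.mem D) : Subsingleton D := by
  have : Subsingleton (⊥ : NonUnitalSubring D) :=
    ⟨fun x y => Subtype.ext ((NonUnitalSubring.mem_bot.mp x.2).trans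
      (NonUnitalSubring.mem_bot.mp y.2).symm)⟩
  have : IsEmpty {x : D // IsZD x} := isEmpty_zdv_of_noZeroDivisors D
  have : IsEmpty {x : (⊥ : NonUnitalSubring D) // IsZD x} :=
    ⟨fun x => x.2.1 (Subsingleton.elim _ _)⟩
  obtain ⟨e⟩ := hgd D (⊥ : NonUnitalSubring D) ‹_› inferInstance hD (M.closed_subring D ⊥ hD)
    ⟨⟨Equiv.equivOfIsEmpty _ _, fun {a} => isEmptyElim a⟩⟩
  exact e.injective.subsingleton

theorem not_mem_zmod (hgd : GraphDetermined M) {p : ℕ} (hp : p.Prime) : ¬ M.mem (ZMod p) := by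
  have : Fact p.Prime := ⟨hp⟩
  intro hmem
  exact not_subsingleton (ZMod p) (hgd.subsingleton_of_noZeroDivisors hmem)

theorem eq_zero_of_isIdempotentElem (hgd : GraphDetermined M) {R : Type} [NonUnitalRing R]
    [Finite R] (hR : M.mem R) {e : R} (he : IsIdempotentElem e) : e = 0 := by
  by_contra he0
  obtain ⟨p, hp, hpe⟩ := Nat.exists_prime_and_dvd (mt AddMonoid.addOrderOf_eq_one_iff.mp he0)
  have hmem : M.mem (ZMod (addOrderOf e)) :=
    M.mem_of_injective (zmodRingHomOfIdempotent he) (zmodAddHom_injective e) hR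
  exact hgd.not_mem_zmod hp (M.closed_image _ _ (ZMod.castHom hpe (ZMod p)).toNonUnitalRingHom
    (ZMod.castHom_surjective hpe) hmem)

theorem eq_zero_of_mul_eq_self (hgd : GraphDetermined M) {R : Type} [NonUnitalRing R]
    [Finite R] (hR : M.mem R) {c u : R} (hcu : c * u = c) : c = 0 := by
  -- The idempotent lemma for semigroups is topological; use the discrete topology.
  let _ : TopologicalSpace R := ⊥
  have : DiscreteTopology R := ⟨rfl⟩
  obtain ⟨e, hce, he⟩ := exists_idempotent_in_compact_subsemigroup
    (fun _ => continuous_of_discreteTopology) {v | c * v = c} ⟨u, hcu⟩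
    (Set.toFinite _).isCompact (fun v (hv : c * v = c) w (hw : c * w = c) =>
      show c * (v * w) = c by rw [← mul_assoc, hv, hw])
  rw [← show c * e = c from hce, hgd.eq_zero_of_isIdempotentElem hR he, mul_zero]

theorem not_mem_nullRing_zmod_sq (hgd : GraphDetermined M) {p : ℕ} (hp : p.Prime) :
    ¬ M.mem (NullRing (ZMod (p ^ 2))) := by
  have : Fact p.Prime := ⟨hp⟩
  intro hmem
  have hdvd : p ∣ p ^ 2 := dvd_pow_self p two_ne_zero
  have hmem_p : M.mem (NullRing (ZMod p)) := M.closed_image _ _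
    (NullRing.map (ZMod.castHom hdvd (ZMod p)).toAddMonoidHom)
    (ZMod.castHom_surjective hdvd) hmem
  have : Finite (NullRing (ZMod (p ^ 2))) := inferInstanceAs (Finite (ZMod (p ^ 2)))
  have : Finite (NullRing (ZMod p)) := inferInstanceAs (Finite (ZMod p))
  obtain ⟨e⟩ := hgd (NullRing (ZMod (p ^ 2))) (Bool → NullRing (ZMod p)) ‹_› inferInstance hmem
    (M.closed_prod _ _ fun _ => hmem_p)
    (nonempty_zdvGraph_iso_of_mul_eq_zero (fun _ _ => rfl) (fun _ _ => rfl) (by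
      simp [NullRing]))
  have hz : ∀ z : ZMod p, p • z = 0 := fun z => by
    rw [nsmul_eq_mul, ZMod.natCast_self, zero_mul]
  have hkill : ∀ y : Bool → NullRing (ZMod p), p • y = 0 := fun y => funext fun i => hz (y i)
  let one : NullRing (ZMod (p ^ 2)) := (1 : ZMod (p ^ 2))
  have h1 : p • one = 0 := e.injective (by rw [map_nsmul, hkill, map_zero])
  have h2 : p ^ 2 ∣ p ^ 1 := by
    rwa [pow_one, ← ZMod.natCast_eq_zero_iff, ← nsmul_one]
  exact absurd ((Nat.pow_dvd_pow_iff_le_right hp.one_lt).mp h2) (by norm_num)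

theorem nsmul_eq_zero_of_sq_nsmul_eq_zero (hgd : GraphDetermined M) {G : Type} [AddCommGroup G]
    [Finite G] (hG : M.mem (NullRing G)) {p : ℕ} (hp : p.Prime) {x : G} (hx : p ^ 2 • x = 0) :
    p • x = 0 := by
  have : Fact p.Prime := ⟨hp⟩
  by_contra hpx
  have hmem : M.mem (NullRing (ZMod (addOrderOf x))) :=
    M.mem_of_injective (NullRing.map (zmodAddHom x)) (zmodAddHom_injective x) hG
  rw [addOrderOf_eq_prime_pow (n := 1) (by rwa [pow_one]) hx] at hmem
  exact hgd.not_mem_nullRing_zmod_sq hp hmem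

theorem nsmul_mem_of_sq_nsmul_mem (hgd : GraphDetermined M) {S : Type} [NonUnitalRing S]
    [Finite S] (hS : M.mem S) {H : AddSubgroup S} (hH : ∀ x y : S, x * y ∈ H) {p : ℕ}
    (hp : p.Prime) {x : S} (hx : p ^ 2 • x ∈ H) : p • x ∈ H := by
  have : Finite (NullRing (S ⧸ H)) := inferInstanceAs (Finite (S ⧸ H))
  rw [← QuotientAddGroup.eq_zero_iff, QuotientAddGroup.mk_nsmul] at hx ⊢
  exact hgd.nsmul_eq_zero_of_sq_nsmul_eq_zero
    (M.closed_image _ _ (QuotientAddGroup.mkNullRing H hH) QuotientAddGroup.mk_surjective hS) hp hx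

theorem exists_zsmul_mul_self_eq_nsmul (hgd : GraphDetermined M) {R : Type} [NonUnitalRing R]
    [Finite R] (hR : M.mem R) {p : ℕ} (hp : p.Prime) {b : R} (hb : b * (b * b) = 0)
    (hpb : p ^ 2 • b = 0) : ∃ k : ℤ, k • (b * b) = p • b := by
  let T := subringSpanSelfSq b hb
  let bT : T := ⟨b, 1, 0, by simp⟩
  let bbT : T := ⟨b * b, 0, 1, by simp⟩
  have hH : ∀ x y : T, x * y ∈ AddSubgroup.zmultiples bbT := by
    rintro ⟨_, m, n, rfl⟩ ⟨_, m', n', rfl⟩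
    exact ⟨m * m', Subtype.ext (mul_eq_zsmul_mul_self_of_cube_eq_zero hb m n m' n').symm⟩
  obtain ⟨k, hk⟩ := hgd.nsmul_mem_of_sq_nsmul_mem (M.closed_subring R T hR) hH hp
    (x := bT) (by rw [show p ^ 2 • bT = 0 from Subtype.ext hpb]; exact zero_mem _)
  exact ⟨k, congrArg Subtype.val hk⟩

theorem sq_nsmul_eq_zero_of_cube_nsmul_eq_zero (hgd : GraphDetermined M) {R : Type}
    [NonUnitalRing R] [Finite R] (hR : M.mem R) {p : ℕ} (hp : p.Prime) {a : R}
    (ha : p ^ 3 • a = 0) : p ^ 2 • a = 0 := by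
  have hb : (p • a) * ((p • a) * (p • a)) = 0 := by
    simp only [smul_mul_assoc, mul_smul_comm, smul_smul]
    rw [show p * p * p = p ^ 3 by ring, ← smul_mul_assoc, ha, zero_mul]
  obtain ⟨k, hk⟩ := hgd.exists_zsmul_mul_self_eq_nsmul hR hp hb
    (by rw [smul_smul, ← pow_succ, ha])
  refine hgd.eq_zero_of_mul_eq_self hR (u := k • a) ?_
  calc p ^ 2 • a * k • a = k • ((p • a) * (p • a)) := by
        simp only [smul_mul_assoc, mul_smul_comm, smul_smul, smul_comm k, ← pow_two]
    _ = p ^ 2 • a := by rw [hk, smul_smul, ← pow_two]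

end GraphDetermined

/-- If `𝔐` is a graph-determined variety, then every finite ring `R ∈ 𝔐` satisfies
`n²·x = 0` for some squarefree positive integer `n` (equivalently, for some product
`q₁²⋯q_t²` of squares of pairwise distinct primes). -/
theorem finite_ring_in_graphDetermined_char (M : RingVariety) (hgd : GraphDetermined M)
    (R : Type) [NonUnitalRing R] (hfin : Finite R) (hmem : M.mem R) :
    ∃ n : ℕ, 0 < n ∧ Squarefree n ∧ ∀ x : R, n ^ 2 • x = 0 := by
  have hE : AddMonoid.exponent R ≠ 0 := AddMonoid.exponent_ne_zero_of_finite
  obtain ⟨c, hc⟩ := Nat.dvd_radical_sq_of_cubeFree hE fun p hp =>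
    AddMonoid.not_pow_succ_dvd_exponent hp.one_lt hE fun _ =>
      hgd.sq_nsmul_eq_zero_of_cube_nsmul_eq_zero hmem hp
  refine ⟨UniqueFactorizationMonoid.radical (AddMonoid.exponent R), Nat.radical_pos _,
    UniqueFactorizationMonoid.squarefree_radical, fun x => ?_⟩
  rw [hc, mul_nsmul, AddMonoid.exponent_nsmul_eq_zero, nsmul_zero]
end
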